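/- arXiv:1708.06696 — 2 statements merged into one kernel-verified Lean document; each statement's English description precedes it below -/
import Mathlib

section
/- The frame rule with disjointness is invertible: let σ be a single atom (t↦u or Arr(t,u)) and Disj(σ,Σ) the pure formula asserting the address set of σ is disjoint from that of Σ. Then Π ∧ (σ * Σ) ⊨ ⋁_{i∈I} ∃y⃗ᵢ(Πᵢ ∧ (σ * Σᵢ)) if and only if Π ∧ Disj(σ,Σ) ∧ Σ ⊨ ⋁_{i∈I} ∃y⃗ᵢ(Πᵢ ∧ Σᵢ), provided the variables y⃗ᵢ do not occur in σ. -/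
abbrev Var := ℕ
abbrev Store := Var → ℕ
abbrev Heap := ℕ → Option ℕ

def Dom (h : Heap) : Set ℕ := {n | h n ≠ none}

def hunion (h1 h2 : Heap) : Heap := fun n =>
  match h1 n with
  | some v => some v
  | none => h2 n

def hempty : Heap := fun _ => none

inductive Term
  | var : Var → Term
  | const : ℕ → Term
  | add : Term → Term → Term

def Term.eval (s : Store) : Term → ℕ
  | .var x => s x
  | .const n => n
  | .add t u => t.eval s + u.eval s

def Term.FV : Term → Set Var
  | .var x => {x}
  | .const _ => ∅
  | .add t u => t.FV ∪ u.FV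

inductive Formula
  | eq : Term → Term → Formula
  | and : Formula → Formula → Formula
  | not : Formula → Formula
  | ex : Var → Formula → Formula
  | emp : Formula
  | pto : Term → Term → Formula
  | arr : Term → Term → Formula
  | sep : Formula → Formula → Formula

def sat (s : Store) (h : Heap) : Formula → Prop
  | .eq t u => t.eval s = u.eval s
  | .and f g => sat s h f ∧ sat s h g
  | .not f => ¬ sat s h f
  | .ex x f => ∃ a : ℕ, sat (Function.update s x a) h f
  | .emp => Dom h = ∅
  | .pto t u => Dom h = {t.eval s} ∧ h (t.eval s) = some (u.eval s)
  | .arr t u => t.eval s ≤ u.eval s ∧ Dom h = Set.Icc (t.eval s) (u.eval s)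
  | .sep f g => ∃ h1 h2 : Heap, Dom h1 ∩ Dom h2 = ∅ ∧ h = hunion h1 h2 ∧ sat s h1 f ∧ sat s h2 g

def Formula.FV : Formula → Set Var
  | .eq t u => t.FV ∪ u.FV
  | .and f g => f.FV ∪ g.FV
  | .not f => f.FV
  | .ex x f => f.FV \ {x}
  | .emp => ∅
  | .pto t u => t.FV ∪ u.FV
  | .arr t u => t.FV ∪ u.FV
  | .sep f g => f.FV ∪ g.FV

inductive Atom
  | emp : Atom
  | pto : Term → Term → Atom
  | arr : Term → Term → Atom

abbrev Spatial := List Atom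

def satAtom (s : Store) (h : Heap) : Atom → Prop
  | .emp => Dom h = ∅
  | .pto t u => Dom h = {t.eval s} ∧ h (t.eval s) = some (u.eval s)
  | .arr t u => t.eval s ≤ u.eval s ∧ Dom h = Set.Icc (t.eval s) (u.eval s)

def satSp (s : Store) (h : Heap) : Spatial → Prop
  | [] => Dom h = ∅
  | a :: sg => ∃ h1 h2 : Heap, Dom h1 ∩ Dom h2 = ∅ ∧ h = hunion h1 h2 ∧
      satAtom s h1 a ∧ satSp s h2 sg

def ltSp (s : Store) (v : ℕ) : Spatial → Prop
  | [] => True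
  | .emp :: sg => ltSp s v sg
  | .pto t _ :: _ => v < t.eval s
  | .arr t _ :: _ => v < t.eval s

def sorted' (s : Store) : Spatial → Prop
  | [] => True
  | .emp :: sg => sorted' s sg
  | .pto t _ :: sg => ltSp s (t.eval s) sg ∧ sorted' s sg
  | .arr t u :: sg => t.eval s ≤ u.eval s ∧ ltSp s (u.eval s) sg ∧ sorted' s sg

def sortedSp (s : Store) (sg : Spatial) : Prop := ltSp s 0 sg ∧ sorted' s sg

def SDom (s : Store) : Spatial → Set ℕ
  | [] => ∅
  | .emp :: sg => SDom s sg
  | .pto t _ :: sg => {t.eval s} ∪ SDom s sg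
  | .arr t u :: sg => Set.Icc (t.eval s) (u.eval s) ∪ SDom s sg

def Atom.FV : Atom → Set Var
  | .emp => ∅
  | .pto t u => t.FV ∪ u.FV
  | .arr t u => t.FV ∪ u.FV

/-- the set of cell addresses required by a single atom -/
def ADom (s : Store) : Atom → Set ℕ
  | .emp => ∅
  | .pto t _ => {t.eval s}
  | .arr t u => Set.Icc (t.eval s) (u.eval s)

/-- `Disj(σ,Σ)`: the memory cells used by `σ` and `Σ` are disjoint
(for an array atom this includes that its address range is nonempty). -/
def DisjP (s : Store) (a : Atom) (sg : Spatial) : Prop :=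
  ADom s a ∩ SDom s sg = ∅ ∧
  (match a with | .arr t u => t.eval s ≤ u.eval s | _ => True)

/-- simultaneous update of a store by a list of variables and values -/
def upds (s : Store) (ys : List Var) (vs : List ℕ) : Store :=
  (ys.zip vs).foldl (fun s p => Function.update s p.1 p.2) s

/-! Left to right: under `Disj(σ,Σ)` some heap for `σ` is disjoint from any model of `Σ`, and
their union models `σ * Σ`. Since the `y⃗ᵢ` do not occur in `σ`, the `σ`-part of the resulting
model of `σ * Σᵢ` has the same domain as the heap we added, and disjoint union is cancellative,
so what remains for `Σᵢ` is the original heap. Right to left: split a model of `σ * Σ` and frame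
`σ` back on. -/

theorem upds_apply_of_not_mem (s : Store) (ys : List Var) (vs : List ℕ) {x : Var}
    (hx : x ∉ ys) : upds s ys vs x = s x := by
  induction ys generalizing s vs with
  | nil => rfl
  | cons y ys ih =>
    rw [List.mem_cons, not_or] at hx
    cases vs with
    | nil => rfl
    | cons v vs => exact (ih _ _ hx.2).trans (Function.update_of_ne hx.1 _ _)

theorem Term.eval_congr {s s' : Store} (t : Term) (hs : ∀ x ∈ t.FV, s x = s' x) :
    t.eval s = t.eval s' := by
  induction t with
  | var x => exact hs x rfl
  | const n => rfl
  | add t u iht ihu =>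
    exact congrArg₂ (· + ·) (iht fun x hx => hs x (Or.inl hx))
      (ihu fun x hx => hs x (Or.inr hx))

theorem satAtom_congr {s s' : Store} (h : Heap) (a : Atom) (hs : ∀ x ∈ a.FV, s x = s' x) :
    satAtom s h a ↔ satAtom s' h a := by
  cases a with
  | emp => rfl
  | pto t u | arr t u =>
    rw [satAtom, satAtom, t.eval_congr fun x hx => hs x (Or.inl hx),
      u.eval_congr fun x hx => hs x (Or.inr hx)]

theorem satAtom_upds (s : Store) {ys : List Var} (vs : List ℕ) (h : Heap) {a : Atom}
    (hfresh : ∀ y ∈ ys, y ∉ a.FV) : satAtom (upds s ys vs) h a ↔ satAtom s h a :=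
  satAtom_congr h a fun x hx => upds_apply_of_not_mem s ys vs fun hy => hfresh x hy hx

theorem Dom_hunion (h₁ h₂ : Heap) : Dom (hunion h₁ h₂) = Dom h₁ ∪ Dom h₂ := by
  ext n
  cases hn : h₁ n <;> simp [Dom, hunion, hn]

theorem hunion_left_cancel {h₁ h₂ h₁' h₂' : Heap} (hdom : Dom h₁ = Dom h₁')
    (hd : Dom h₁ ∩ Dom h₂ = ∅) (hd' : Dom h₁' ∩ Dom h₂' = ∅)
    (heq : hunion h₁ h₂ = hunion h₁' h₂') : h₂ = h₂' := by
  funext n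
  by_cases hn : n ∈ Dom h₁
  · have hn₂ : n ∉ Dom h₂ := fun hn₂ => hd.subset ⟨hn, hn₂⟩
    have hn₂' : n ∉ Dom h₂' := fun hn₂' => hd'.subset ⟨hdom ▸ hn, hn₂'⟩
    simp only [Dom, Set.mem_ofPred_eq, not_not] at hn₂ hn₂'
    rw [hn₂, hn₂']
  · have hn' : n ∉ Dom h₁' := hdom ▸ hn
    simp only [Dom, Set.mem_ofPred_eq, not_not] at hn hn'
    simpa [hunion, hn, hn'] using congrFun heq n

theorem Dom_of_satAtom {s : Store} {h : Heap} {a : Atom} (ha : satAtom s h a) :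
    Dom h = ADom s a := by
  cases a with
  | emp => exact ha
  | pto t u => exact ha.1
  | arr t u => exact ha.2

theorem Dom_of_satSp {s : Store} {h : Heap} {sg : Spatial} (hsg : satSp s h sg) :
    Dom h = SDom s sg := by
  induction sg generalizing h with
  | nil => exact hsg
  | cons a sg ih =>
    obtain ⟨h₁, h₂, -, rfl, ha, hsg⟩ := hsg
    rw [Dom_hunion, Dom_of_satAtom ha, ih hsg]
    cases a <;> simp [ADom, SDom]

theorem satSp_cons_hunion_iff {s : Store} {h₁ h : Heap} {a : Atom} {sg : Spatial}
    (hd : Dom h₁ ∩ Dom h = ∅) (ha : satAtom s h₁ a) :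
    satSp s (hunion h₁ h) (a :: sg) ↔ satSp s h sg := by
  constructor
  · rintro ⟨h₁', h', hd', heq, ha', hsg⟩
    have hdom : Dom h₁ = Dom h₁' := by rw [Dom_of_satAtom ha, Dom_of_satAtom ha']
    rwa [hunion_left_cancel hdom hd hd' heq]
  · exact fun hsg => ⟨h₁, h, hd, rfl, ha, hsg⟩

theorem disjP_iff_exists_satAtom {s : Store} {a : Atom} {sg : Spatial} :
    DisjP s a sg ↔ ∃ h, satAtom s h a ∧ Dom h ∩ SDom s sg = ∅ := by
  constructor
  · rintro ⟨hd, hle⟩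
    obtain ⟨h, ha⟩ : ∃ h, satAtom s h a := by
      cases a with
      | emp => exact ⟨hempty, Set.eq_empty_of_forall_notMem fun _ hn => hn rfl⟩
      | pto t u =>
        refine ⟨fun n => if n = t.eval s then some (u.eval s) else none, ?_, by simp⟩
        ext n; simp [Dom]
      | arr t u =>
        refine ⟨fun n => if n ∈ Set.Icc (t.eval s) (u.eval s) then some 0 else none, hle, ?_⟩
        ext n; simp [Dom]
    exact ⟨h, ha, by rwa [Dom_of_satAtom ha]⟩
  · rintro ⟨h, ha, hd⟩
    refine ⟨by rwa [← Dom_of_satAtom ha], ?_⟩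
    cases a with
    | emp | pto t u => trivial
    | arr t u => exact ha.1

theorem stmt13_general {I : Type} (a : Atom) (Pi : Store → Prop) (sg : Spatial)
    (Pii : I → Store → Prop) (sgi : I → Spatial) (ys : I → List Var)
    (hfresh : ∀ i y, y ∈ ys i → y ∉ a.FV) :
    (∀ (s : Store) (h : Heap), Pi s → satSp s h (a :: sg) →
      ∃ i, ∃ vs : List ℕ, (Pii i) (upds s (ys i) vs) ∧
        satSp (upds s (ys i) vs) h (a :: sgi i)) ↔
    (∀ (s : Store) (h : Heap), Pi s → DisjP s a sg → satSp s h sg →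
      ∃ i, ∃ vs : List ℕ, (Pii i) (upds s (ys i) vs) ∧
        satSp (upds s (ys i) vs) h (sgi i)) := by
  constructor
  · intro H s h hPi hdisj hsg
    obtain ⟨h₁, ha, hd⟩ := disjP_iff_exists_satAtom.mp hdisj
    rw [← Dom_of_satSp hsg] at hd
    obtain ⟨i, vs, hPii, hsgi⟩ := H s (hunion h₁ h) hPi ⟨h₁, h, hd, rfl, ha, hsg⟩
    have ha' := (satAtom_upds s vs h₁ (hfresh i)).mpr ha
    exact ⟨i, vs, hPii, (satSp_cons_hunion_iff hd ha').mp hsgi⟩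
  · rintro H s _ hPi ⟨h₁, h, hd, rfl, ha, hsg⟩
    have hdisj : DisjP s a sg :=
      disjP_iff_exists_satAtom.mpr ⟨h₁, ha, Dom_of_satSp hsg ▸ hd⟩
    obtain ⟨i, vs, hPii, hsgi⟩ := H s h hPi hdisj hsg
    exact ⟨i, vs, hPii, h₁, h, hd, rfl, (satAtom_upds s vs h₁ (hfresh i)).mpr ha, hsgi⟩

/-- the invertible frame rule:
`Π ∧ σ*Σ ⊨ ⋁ᵢ ∃y⃗ᵢ(Πᵢ ∧ σ*Σᵢ)` iff `Π ∧ Disj(σ,Σ) ∧ Σ ⊨ ⋁ᵢ ∃y⃗ᵢ(Πᵢ ∧ Σᵢ)`,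
provided the `y⃗ᵢ` do not occur in `σ`. -/
theorem stmt13 {I : Type} [Fintype I] (a : Atom) (Pi : Store → Prop) (sg : Spatial)
    (Pii : I → Store → Prop) (sgi : I → Spatial) (ys : I → List Var)
    (hfresh : ∀ i y, y ∈ ys i → y ∉ a.FV) :
    (∀ (s : Store) (h : Heap), Pi s → satSp s h (a :: sg) →
      ∃ i, ∃ vs : List ℕ, (Pii i) (upds s (ys i) vs) ∧
        satSp (upds s (ys i) vs) h (a :: sgi i)) ↔
    (∀ (s : Store) (h : Heap), Pi s → DisjP s a sg → satSp s h sg →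
      ∃ i, ∃ vs : List ℕ, (Pii i) (upds s (ys i) vs) ∧
        satSp (upds s (ys i) vs) h (sgi i)) :=
  stmt13_general a Pi sg Pii sgi ys hfresh
end

section
/- If s,h ⊨ Π ∧ Sorted(Σ) ∧ Σ and s,h' ⊨ Π ∧ Sorted(Σ) ∧ Σ for two heaps h, h' with the same store s, then Dom(h) = Dom(h') (satisfaction of a pure-plus-spatial symbolic heap at a fixed store determines the heap domain uniquely). -/
/-! Every atom fixes the domain of its part of the heap as a function of the store alone, and `*`
takes the union of these domains, so any heap satisfying `Σ` at `s` has domain `SDom s Σ`. -/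

lemma dom_hunion (h1 h2 : Heap) : Dom (hunion h1 h2) = Dom h1 ∪ Dom h2 := by
  ext n
  simp only [Dom, hunion, Set.mem_ofPred_eq, Set.mem_union]
  cases h1 n <;> simp

lemma dom_eq_sDom_of_satSp {s : Store} {h : Heap} {sg : Spatial} (H : satSp s h sg) :
    Dom h = SDom s sg := by
  induction sg generalizing h with
  | nil => exact H
  | cons a sg ih =>
    obtain ⟨h1, h2, -, rfl, Ha, Hsg⟩ := H
    rw [dom_hunion, ih Hsg]
    cases a with
    | emp => simp only [satAtom] at Ha; simp only [SDom, Ha, Set.empty_union]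
    | pto t u => rw [Ha.1, SDom]
    | arr t u => rw [Ha.2, SDom]

/-- satisfaction of a symbolic heap `Π ∧ Sorted(Σ) ∧ Σ` at a
fixed store determines the heap domain uniquely. -/
theorem stmt18 (s : Store) (h h' : Heap) (Pi : Store → Prop) (sg : Spatial)
    (H1 : Pi s ∧ sortedSp s sg ∧ satSp s h sg)
    (H2 : Pi s ∧ sortedSp s sg ∧ satSp s h' sg) :
    Dom h = Dom h' := by
  rw [dom_eq_sDom_of_satSp H1.2.2, dom_eq_sDom_of_satSp H2.2.2]
end
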